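/- arXiv:1106.2717 — 3 statements merged into one kernel-verified Lean document; each statement's English description precedes it below -/
import Mathlib

section
/- For every L > 0 and all m, μ ∈ ℝ, the absolutely convergent integral (1/√(2πL)) ∫_ℝ exp( −(u − m − L²)²/(2L) − 2uL + μL + 2L³/3 ) · Ai( 2^{−1/3}(2u − μ) ) du equals Ai( 2^{−1/3}(2m − μ) ); in particular the left-hand side does not depend on L. -/
/-!
Shifting the contour of `∫₀^∞ exp (i (z³/3 + x z)) dz` up by `δ > 0` (Cauchy's theorem on the
rectangles `[0, T] × [0, δ]`) gives the absolutely convergent representation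
`Ai x = π⁻¹ exp (δ³/3 - x δ) ∫₀^∞ exp (-δ t²) cos (t³/3 + (x - δ²) t) dt`.
In this form the `u`-integral against a Gaussian can be done under the `t`-integral by Fubini:
the Fourier transform of the Gaussian only increases the damping `δ` and shifts `x`. With
`δ = 2^{1/3} L` the damping doubles, the result is again the representation of
`Ai (2^{-1/3} (2m - μ))`, now with shift `2δ`, and all the `L`-dependent prefactors cancel.
-/

open MeasureTheory Real Filter

/-- The Airy function, defined by the conditionally convergent improper integral
`Ai(x) = (1/π) · lim_{T→∞} ∫₀^T cos(t³/3 + x t) dt`. -/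
noncomputable def Ai (x : ℝ) : ℝ :=
  (1 / π) * limUnder atTop (fun T : ℝ => ∫ t in (0:ℝ)..T, Real.cos (t ^ 3 / 3 + x * t))

open Complex (I)
open Set Topology

theorem integral_exp_neg_sq_div_mul_cos {σ : ℝ} (hσ : 0 < σ) (c b g : ℝ) :
    ∫ u : ℝ, exp (-(u - c) ^ 2 / (2 * σ)) * cos (b * u + g)
      = √(2 * π * σ) * exp (-(b ^ 2 * σ / 2)) * cos (b * c + g) := by
  have hσ' : (σ : ℂ) ≠ 0 := Complex.ofReal_ne_zero.mpr hσ.ne'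
  set B : ℂ := ((-(2 * σ)⁻¹ : ℝ) : ℂ)
  set C : ℂ := c / σ + b * I
  set D : ℂ := -c ^ 2 / (2 * σ) + g * I
  have hB : B.re < 0 := by
    rw [Complex.ofReal_re, neg_lt_zero]
    positivity
  have hpoint (u : ℝ) : Complex.exp (B * u ^ 2 + C * u + D)
      = exp (-(u - c) ^ 2 / (2 * σ)) * Complex.exp (↑(b * u + g) * I) := by
    rw [Complex.ofReal_exp, ← Complex.exp_add]
    congr 1
    push_cast [B, C, D]
    field_simp
    ring
  have hroot : (π / -B) ^ (1 / 2 : ℂ) = ↑√(2 * π * σ) := by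
    rw [show π / -B = ((2 * π * σ : ℝ) : ℂ) by push_cast [B]; field_simp,
      sqrt_eq_rpow, Complex.ofReal_cpow (by positivity)]
    norm_num
  have hquad : D - C ^ 2 / (4 * B) = ((-(b ^ 2 * σ / 2) : ℝ) : ℂ) + ((b * c + g : ℝ) : ℂ) * I := by
    push_cast [B, C, D]
    field_simp
    ring_nf
    rw [Complex.I_sq]
    ring
  calc ∫ u : ℝ, exp (-(u - c) ^ 2 / (2 * σ)) * cos (b * u + g)
      = ∫ u : ℝ, (Complex.exp (B * u ^ 2 + C * u + D)).re := by
        simp_rw [hpoint, Complex.re_ofReal_mul, Complex.exp_ofReal_mul_I_re]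
    _ = (∫ u : ℝ, Complex.exp (B * u ^ 2 + C * u + D)).re :=
        integral_re (integrable_cexp_quadratic' hB C D)
    _ = √(2 * π * σ) * exp (-(b ^ 2 * σ / 2)) * cos (b * c + g) := by
        rw [integral_cexp_quadratic hB, hroot, hquad, Complex.exp_add, ← Complex.ofReal_exp,
          ← mul_assoc, ← Complex.ofReal_mul, Complex.re_ofReal_mul, Complex.exp_ofReal_mul_I_re]

noncomputable def dampedAiryIntegral (δ y : ℝ) : ℝ :=
  ∫ t in Ioi 0, exp (-(δ * t ^ 2)) * cos (t ^ 3 / 3 + y * t)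

noncomputable def airyIntegrand (x : ℝ) (z : ℂ) : ℂ :=
  Complex.exp (I * (z ^ 3 / 3 + x * z))

namespace airyIntegrand

variable (x : ℝ)

theorem add_mul_I (t y : ℝ) :
    airyIntegrand x (t + y * I)
      = exp (y ^ 3 / 3 - x * y - y * t ^ 2)
        * Complex.exp (((t ^ 3 / 3 + (x - y ^ 2) * t : ℝ) : ℂ) * I) := by
  rw [airyIntegrand, Complex.ofReal_exp, ← Complex.exp_add]
  congr 1
  push_cast
  linear_combination (y * t ^ 2 + x * y - y ^ 3 / 3 + t * y ^ 2 * I + y ^ 3 / 3 * I ^ 2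
    : ℂ) * Complex.I_sq

theorem re_add_mul_I (t y : ℝ) :
    (airyIntegrand x (t + y * I)).re
      = exp (y ^ 3 / 3 - x * y - y * t ^ 2) * cos (t ^ 3 / 3 + (x - y ^ 2) * t) := by
  rw [add_mul_I, Complex.re_ofReal_mul, Complex.exp_ofReal_mul_I_re]

theorem norm_add_mul_I (t y : ℝ) :
    ‖airyIntegrand x (t + y * I)‖ = exp (y ^ 3 / 3 - x * y - y * t ^ 2) := by
  rw [add_mul_I, norm_mul, Complex.norm_exp_ofReal_mul_I, mul_one, Complex.norm_real,
    norm_of_nonneg (exp_pos _).le]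

theorem differentiable : Differentiable ℂ (airyIntegrand x) := by
  unfold airyIntegrand
  fun_prop

theorem continuous : Continuous (airyIntegrand x) := (differentiable x).continuous

theorem integral_bottom_side_eq (δ T : ℝ) :
    ∫ t in (0 : ℝ)..T, airyIntegrand x t
      = (∫ t in (0 : ℝ)..T, airyIntegrand x (t + δ * I))
        - I * (∫ y in (0 : ℝ)..δ, airyIntegrand x (T + y * I))
        + I * ∫ y in (0 : ℝ)..δ, airyIntegrand x (y * I) := by
  have h := Complex.integral_boundary_rect_eq_zero_of_differentiableOn (airyIntegrand x) 0
    (T + δ * I) (differentiable x).differentiableOn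
  simp only [Complex.zero_im, Complex.ofReal_zero, zero_mul, add_zero, Complex.zero_re,
    Complex.add_re, Complex.ofReal_re, Complex.mul_re, Complex.I_re, mul_zero, Complex.ofReal_im,
    Complex.I_im, mul_one, sub_self, Complex.add_im, Complex.mul_im, zero_add, smul_eq_mul] at h
  linear_combination h

theorem tendsto_integral_right_side {δ : ℝ} (hδ : 0 < δ) :
    Tendsto (fun T : ℝ => ∫ y in (0 : ℝ)..δ, airyIntegrand x (T + y * I)) atTop (𝓝 0) := by
  suffices Tendsto (fun T : ℝ => ∫ y in (0 : ℝ)..δ, airyIntegrand x (T + y * I)) atTop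
      (𝓝 (∫ _ in (0 : ℝ)..δ, (0 : ℂ))) by simpa using this
  refine intervalIntegral.tendsto_integral_filter_of_dominated_convergence
    (fun _ => exp (δ ^ 3 / 3 + |x| * δ)) ?_ ?_ intervalIntegrable_const ?_
  · exact Eventually.of_forall fun T => ((continuous x).comp (by fun_prop)).aestronglyMeasurable
  · filter_upwards with T
    filter_upwards with y hy
    rw [uIoc_of_le hδ.le] at hy
    rw [norm_add_mul_I]
    gcongr
    have hcube := pow_le_pow_left₀ hy.1.le hy.2 3
    have hlin : -x * y ≤ |x| * δ := (mul_le_mul_of_nonneg_right (neg_le_abs x) hy.1.le).trans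
      (mul_le_mul_of_nonneg_left hy.2 (abs_nonneg x))
    nlinarith [mul_nonneg hy.1.le (sq_nonneg T)]
  · filter_upwards with y hy
    rw [uIoc_of_le hδ.le] at hy
    rw [tendsto_zero_iff_norm_tendsto_zero]
    simp_rw [norm_add_mul_I]
    refine tendsto_exp_atBot.comp (tendsto_atBot_add_const_left _ _ ?_)
    exact tendsto_neg_atTop_atBot.comp ((tendsto_pow_atTop two_ne_zero).const_mul_atTop hy.1)

theorem integrableOn_top_side {δ : ℝ} (hδ : 0 < δ) :
    IntegrableOn (fun t : ℝ => airyIntegrand x (t + δ * I)) (Ioi 0) := by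
  refine Integrable.mono' (((integrable_exp_neg_mul_sq hδ).const_mul
    (exp (δ ^ 3 / 3 - x * δ))).restrict) ((continuous x).comp (by fun_prop)).aestronglyMeasurable
    (.of_forall fun t => ?_)
  rw [norm_add_mul_I, ← exp_add]
  exact (congrArg exp (by ring)).le

end airyIntegrand

theorem tendsto_integral_airy_cos {δ : ℝ} (hδ : 0 < δ) (x : ℝ) :
    Tendsto (fun T : ℝ => ∫ t in (0 : ℝ)..T, cos (t ^ 3 / 3 + x * t)) atTop
      (𝓝 (exp (δ ^ 3 / 3 - x * δ) * dampedAiryIntegral δ (x - δ ^ 2))) := by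
  have hcos (T : ℝ) : ∫ t in (0 : ℝ)..T, cos (t ^ 3 / 3 + x * t)
      = (∫ t in (0 : ℝ)..T, airyIntegrand x t).re := by
    have hcont : Continuous fun t : ℝ => airyIntegrand x t :=
      (airyIntegrand.continuous x).comp Complex.continuous_ofReal
    have := Complex.reCLM.intervalIntegral_comp_comm (hcont.intervalIntegrable (μ := volume) 0 T)
    rw [Complex.reCLM_apply] at this
    rw [← this]
    congr with t
    simpa using (airyIntegrand.re_add_mul_I x t 0).symm
  have hlim : Tendsto (fun T : ℝ => ∫ t in (0 : ℝ)..T, airyIntegrand x t) atTop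
      (𝓝 ((∫ t : ℝ in Ioi 0, airyIntegrand x (t + δ * I))
        + I * ∫ y in (0 : ℝ)..δ, airyIntegrand x (y * I))) := by
    have := ((intervalIntegral_tendsto_integral_Ioi 0 (airyIntegrand.integrableOn_top_side x hδ)
      tendsto_id).sub ((airyIntegrand.tendsto_integral_right_side x hδ).const_mul I)).add_const
      (I * ∫ y in (0 : ℝ)..δ, airyIntegrand x (y * I))
    simpa [airyIntegrand.integral_bottom_side_eq x δ] using this
  -- the left side `I * ∫ y in 0..δ, exp (y ^ 3 / 3 - x * y)` is purely imaginary
  have hleft : ∫ y in (0 : ℝ)..δ, airyIntegrand x (y * I)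
      = ((∫ y in (0 : ℝ)..δ, exp (y ^ 3 / 3 - x * y) : ℝ) : ℂ) := by
    rw [← intervalIntegral.integral_ofReal]
    congr with y
    simpa using airyIntegrand.add_mul_I x 0 y
  have htop : (∫ t : ℝ in Ioi 0, airyIntegrand x (t + δ * I)).re
      = exp (δ ^ 3 / 3 - x * δ) * dampedAiryIntegral δ (x - δ ^ 2) := by
    rw [← RCLike.re_to_complex, ← integral_re (airyIntegrand.integrableOn_top_side x hδ),
      dampedAiryIntegral, ← integral_const_mul]
    congr with t
    rw [RCLike.re_to_complex, airyIntegrand.re_add_mul_I, sub_eq_add_neg _ (δ * t ^ 2), exp_add,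
      mul_assoc]
  simp_rw [hcos]
  simpa [hleft, htop, Function.comp_def] using (Complex.continuous_re.tendsto _).comp hlim

theorem Ai_eq_dampedAiryIntegral {δ : ℝ} (hδ : 0 < δ) (x : ℝ) :
    Ai x = 1 / π * (exp (δ ^ 3 / 3 - x * δ) * dampedAiryIntegral δ (x - δ ^ 2)) := by
  rw [Ai, (tendsto_integral_airy_cos hδ x).limUnder_eq]

section GaussianSmoothing

variable {σ δ : ℝ} (hσ : 0 < σ) (hδ : 0 < δ) (c κ β : ℝ)
include hσ hδ

theorem integrable_prod_gaussian_mul_dampedAiry :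
    Integrable (Function.uncurry fun u t : ℝ =>
      exp (-(u - c) ^ 2 / (2 * σ)) * (exp (-(δ * t ^ 2)) * cos (t ^ 3 / 3 + (κ * u + β) * t)))
      (volume.prod (volume.restrict (Ioi 0))) := by
  have hgauss : Integrable fun u : ℝ => exp (-(u - c) ^ 2 / (2 * σ)) := by
    simpa [div_eq_inv_mul, neg_mul] using
      (integrable_exp_neg_mul_sq (inv_pos.mpr (by positivity : 0 < 2 * σ))).comp_sub_right c
  have hdamp : Integrable (fun t : ℝ => exp (-(δ * t ^ 2))) (volume.restrict (Ioi 0)) := by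
    simpa using (integrable_exp_neg_mul_sq hδ).restrict
  refine (hgauss.mul_prod hdamp).mono' (by fun_prop) (.of_forall fun ⟨u, t⟩ => ?_)
  simp only [Function.uncurry_apply_pair, norm_mul, norm_of_nonneg (exp_pos _).le]
  gcongr
  exact mul_le_of_le_one_right (exp_pos _).le (abs_cos_le_one _)

theorem integrable_gaussian_mul_dampedAiryIntegral :
    Integrable fun u : ℝ => exp (-(u - c) ^ 2 / (2 * σ)) * dampedAiryIntegral δ (κ * u + β) := by
  simpa only [dampedAiryIntegral, ← integral_const_mul, Function.uncurry_apply_pair] using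
    (integrable_prod_gaussian_mul_dampedAiry hσ hδ c κ β).integral_prod_left

theorem integral_gaussian_mul_dampedAiryIntegral :
    ∫ u : ℝ, exp (-(u - c) ^ 2 / (2 * σ)) * dampedAiryIntegral δ (κ * u + β)
      = √(2 * π * σ) * dampedAiryIntegral (δ + κ ^ 2 * σ / 2) (κ * c + β) := by
  simp only [dampedAiryIntegral, ← integral_const_mul]
  rw [integral_integral_swap (integrable_prod_gaussian_mul_dampedAiry hσ hδ c κ β)]
  congr with t
  have harg (u : ℝ) : t ^ 3 / 3 + (κ * u + β) * t = κ * t * u + (t ^ 3 / 3 + β * t) := by ring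
  simp_rw [harg, mul_left_comm _ (exp (-(δ * t ^ 2))), integral_const_mul,
    integral_exp_neg_sq_div_mul_cos hσ]
  rw [show -((δ + κ ^ 2 * σ / 2) * t ^ 2) = -(δ * t ^ 2) + -((κ * t) ^ 2 * σ / 2) by ring, exp_add]
  ring

end GaussianSmoothing

section CubeRootOfHalf

variable {a L : ℝ} (ha : 0 < a) (ha3 : a ^ 3 = 1 / 2) (hL : 0 < L) (m μ : ℝ)
include ha ha3 hL

-- `2 * a ^ 2 * L = 2 ^ (1 / 3) * L` is the contour shift that makes the exponents match.
theorem exp_mul_Ai_eq_exp_mul_dampedAiryIntegral (u : ℝ) :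
    exp (-(u - m - L ^ 2) ^ 2 / (2 * L) - 2 * u * L + μ * L + 2 * L ^ 3 / 3) * Ai (a * (2 * u - μ))
      = exp (2 * μ * L - 4 * m * L + 16 * L ^ 3 / 3) / π
        * (exp (-(u - (m - 3 * L ^ 2)) ^ 2 / (2 * L))
          * dampedAiryIntegral (2 * a ^ 2 * L) (2 * a * u + (-(a * μ) - (2 * a ^ 2 * L) ^ 2))) := by
  set δ := 2 * a ^ 2 * L
  have hexp : -(u - m - L ^ 2) ^ 2 / (2 * L) - 2 * u * L + μ * L + 2 * L ^ 3 / 3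
      + (δ ^ 3 / 3 - a * (2 * u - μ) * δ)
      = 2 * μ * L - 4 * m * L + 16 * L ^ 3 / 3 + -(u - (m - 3 * L ^ 2)) ^ 2 / (2 * L) := by
    field_simp
    linear_combination (-24 * u * L ^ 2 + 12 * L ^ 2 * μ + 16 * L ^ 4 * (a ^ 3 + 1 / 2)) * ha3
  have hexp' := congrArg exp hexp
  rw [exp_add _ (δ ^ 3 / 3 - _), exp_add (2 * μ * L - 4 * m * L + 16 * L ^ 3 / 3)] at hexp'
  rw [Ai_eq_dampedAiryIntegral (by positivity : 0 < δ),
    show a * (2 * u - μ) - δ ^ 2 = 2 * a * u + (-(a * μ) - δ ^ 2) by ring]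
  linear_combination dampedAiryIntegral δ (2 * a * u + (-(a * μ) - δ ^ 2)) / π * hexp'

theorem Ai_eq_exp_mul_dampedAiryIntegral_double_shift :
    Ai (a * (2 * m - μ)) = exp (2 * μ * L - 4 * m * L + 16 * L ^ 3 / 3) / π
      * dampedAiryIntegral (2 * a ^ 2 * L + (2 * a) ^ 2 * L / 2)
        (2 * a * (m - 3 * L ^ 2) + (-(a * μ) - (2 * a ^ 2 * L) ^ 2)) := by
  set δ := 2 * a ^ 2 * L
  have hexp : (2 * δ) ^ 3 / 3 - a * (2 * m - μ) * (2 * δ)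
      = 2 * μ * L - 4 * m * L + 16 * L ^ 3 / 3 := by
    linear_combination (64 / 3 * L ^ 3 * (a ^ 3 + 1 / 2) - 4 * L * (2 * m - μ)) * ha3
  have harg : a * (2 * m - μ) - (2 * δ) ^ 2 = 2 * a * (m - 3 * L ^ 2) + (-(a * μ) - δ ^ 2) := by
    linear_combination (-12 * a * L ^ 2) * ha3
  rw [Ai_eq_dampedAiryIntegral (by positivity : 0 < 2 * δ), hexp, harg,
    show 2 * δ = δ + (2 * a) ^ 2 * L / 2 by ring]
  ring

end CubeRootOfHalf

theorem two_rpow_neg_one_third_pow_three : ((2 : ℝ) ^ (-(1 / 3) : ℝ)) ^ 3 = 1 / 2 := by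
  rw [← rpow_natCast, ← rpow_mul zero_le_two]
  norm_num

/-- The Gaussian–Airy integral identity: for every `L > 0` and all `m, μ ∈ ℝ`,
`(1/√(2πL)) ∫_ℝ exp(−(u−m−L²)²/(2L) − 2uL + μL + 2L³/3) Ai(2^{−1/3}(2u−μ)) du
 = Ai(2^{−1/3}(2m−μ))`; in particular the left-hand side does not depend on `L`. -/
theorem gaussian_airy (L m μ : ℝ) (hL : 0 < L) :
    Integrable (fun u : ℝ =>
      Real.exp (-(u - m - L ^ 2) ^ 2 / (2 * L) - 2 * u * L + μ * L + 2 * L ^ 3 / 3)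
        * Ai ((2 : ℝ) ^ (-(1/3) : ℝ) * (2 * u - μ))) ∧
    (1 / Real.sqrt (2 * π * L)) *
      ∫ u : ℝ, Real.exp (-(u - m - L ^ 2) ^ 2 / (2 * L) - 2 * u * L + μ * L + 2 * L ^ 3 / 3)
        * Ai ((2 : ℝ) ^ (-(1/3) : ℝ) * (2 * u - μ))
      = Ai ((2 : ℝ) ^ (-(1/3) : ℝ) * (2 * m - μ)) := by
  have ha : 0 < (2 : ℝ) ^ (-(1 / 3) : ℝ) := by positivity
  have ha3 := two_rpow_neg_one_third_pow_three
  have hδ : 0 < 2 * ((2 : ℝ) ^ (-(1 / 3) : ℝ)) ^ 2 * L := by positivity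
  simp_rw [exp_mul_Ai_eq_exp_mul_dampedAiryIntegral ha ha3 hL m μ]
  refine ⟨(integrable_gaussian_mul_dampedAiryIntegral hL hδ _ _ _).const_mul _, ?_⟩
  rw [integral_const_mul, integral_gaussian_mul_dampedAiryIntegral hL hδ,
    Ai_eq_exp_mul_dampedAiryIntegral_double_shift ha ha3 hL m μ]
  field_simp
end

section
/- Let f(w, w̃) = −(w + w̃)²/8 + (w + w̃) − 4/3 and let D₁ = { (w, w̃) ∈ ℝ² : w ≤ 1 and w̃ ≤ 1 } \ [0,1]². Then there exist C > 0 and L₀ > 0 such that for all L ≥ L₀, ∫_{D₁} e^{2L³ f(w, w̃)} dw dw̃ ≤ C L^{−9/2} e^{−(11/12) L³}. -/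
/-!
On `D₁` one of the coordinates is negative and the other is at most `1`, so `D₁` lies in the
union of the quadrants `(-∞, 0] × (-∞, 1]` and `(-∞, 1] × (-∞, 0]`. The exponent depends only on
`s = w + w̃` and is concave in `s`, so it lies below its tangent at `s = 1`, where it equals
`-(11/12) L³` and has slope `c = (3/2) L³`. The integral of `e^{c (s - 1)}` over each quadrant is
`1 / c²`, which gives the bound with the prefactor `2 / c² ≤ L^{-6} ≤ L^{-9/2}`.
-/

open MeasureTheory

/-- The region `D₁ = {w ≤ 1, w̃ ≤ 1} \ [0,1]²`. -/
def D₁ : Set (ℝ × ℝ) :=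
  {p : ℝ × ℝ | p.1 ≤ 1 ∧ p.2 ≤ 1} \ (Set.Icc (0:ℝ) 1 ×ˢ Set.Icc (0:ℝ) 1)

open Set Real

lemma setIntegral_le_add_of_subset_union {α : Type*} [MeasurableSpace α] {μ : Measure α}
    {f : α → ℝ} {s A B : Set α} (hs : s ⊆ A ∪ B) (hf : 0 ≤ f)
    (hA : IntegrableOn f A μ) (hB : IntegrableOn f B μ) :
    ∫ x in s, f x ∂μ ≤ ∫ x in A, f x ∂μ + ∫ x in B, f x ∂μ := by
  rw [← integral_add_measure hA hB]
  exact integral_mono_measure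
    ((Measure.restrict_mono hs le_rfl).trans (Measure.restrict_union_le A B))
    (Filter.Eventually.of_forall hf) (hA.integrable.add_measure hB)

lemma integrableOn_exp_mul_add_Iic_prod {c : ℝ} (hc : 0 < c) (a b : ℝ) :
    IntegrableOn (fun p : ℝ × ℝ => exp (c * (p.1 + p.2))) (Iic a ×ˢ Iic b) := by
  simp_rw [mul_add, exp_add]
  rw [IntegrableOn, Measure.volume_eq_prod, ← Measure.prod_restrict]
  exact (integrableOn_exp_mul_Iic hc a).mul_prod (integrableOn_exp_mul_Iic hc b)

lemma setIntegral_exp_mul_add_Iic_prod {c : ℝ} (hc : 0 < c) (a b : ℝ) :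
    ∫ p in Iic a ×ˢ Iic b, exp (c * (p.1 + p.2)) = exp (c * (a + b)) / c ^ 2 := by
  simp_rw [mul_add, exp_add]
  rw [Measure.volume_eq_prod, ← Measure.prod_restrict,
    integral_prod_mul (fun x => exp (c * x)) (fun y => exp (c * y)),
    integral_exp_mul_Iic hc, integral_exp_mul_Iic hc]
  ring

lemma D₁_subset_union : D₁ ⊆ Iic 0 ×ˢ Iic 1 ∪ Iic 1 ×ˢ Iic 0 := by
  rintro ⟨x, y⟩ ⟨⟨hx, hy⟩, hxy⟩
  simp only [mem_prod, mem_Icc, not_and_or, not_le] at hxy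
  simp only [mem_union, mem_prod, mem_Iic]
  rcases hxy with (hx0 | hx1) | (hy0 | hy1)
  · exact .inl ⟨hx0.le, hy⟩
  · exact (hx1.not_ge hx).elim
  · exact .inr ⟨hx, hy0.le⟩
  · exact (hy1.not_ge hy).elim

lemma integrableOn_D₁_exp_mul_add {c : ℝ} (hc : 0 < c) :
    IntegrableOn (fun p : ℝ × ℝ => exp (c * (p.1 + p.2))) D₁ :=
  ((integrableOn_exp_mul_add_Iic_prod hc 0 1).union
    (integrableOn_exp_mul_add_Iic_prod hc 1 0)).mono_set D₁_subset_union

lemma setIntegral_D₁_exp_mul_add_le {c : ℝ} (hc : 0 < c) :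
    ∫ p in D₁, exp (c * (p.1 + p.2)) ≤ 2 * exp c / c ^ 2 := by
  calc ∫ p in D₁, exp (c * (p.1 + p.2))
      ≤ (∫ p in Iic 0 ×ˢ Iic 1, exp (c * (p.1 + p.2)))
          + ∫ p in Iic 1 ×ˢ Iic 0, exp (c * (p.1 + p.2)) :=
        setIntegral_le_add_of_subset_union D₁_subset_union (fun _ => (exp_pos _).le)
          (integrableOn_exp_mul_add_Iic_prod hc 0 1) (integrableOn_exp_mul_add_Iic_prod hc 1 0)
    _ = 2 * exp c / c ^ 2 := by
        rw [setIntegral_exp_mul_add_Iic_prod hc, setIntegral_exp_mul_add_Iic_prod hc]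
        ring_nf

lemma exponent_le_tangent_at_one {L : ℝ} (hL : 0 ≤ L) (s : ℝ) :
    2 * L ^ 3 * (-s ^ 2 / 8 + s - 4 / 3)
      ≤ -(11 / 12) * L ^ 3 - 3 / 2 * L ^ 3 + 3 / 2 * L ^ 3 * s := by
  have hL3 : 0 ≤ L ^ 3 := by positivity
  nlinarith [mul_nonneg hL3 (sq_nonneg (s - 1))]

lemma two_div_sq_le_rpow {L : ℝ} (hL : 1 ≤ L) :
    2 / (3 / 2 * L ^ 3) ^ 2 ≤ L ^ (-(9 / 2) : ℝ) := by
  have hL0 : 0 < L := zero_lt_one.trans_le hL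
  calc 2 / (3 / 2 * L ^ 3) ^ 2 ≤ L ^ (-(6 : ℝ)) := by
        rw [rpow_neg hL0.le, div_le_iff₀ (by positivity)]
        norm_cast
        field_simp
        norm_num
    _ ≤ L ^ (-(9 / 2) : ℝ) := rpow_le_rpow_of_exponent_le hL (by norm_num)

/-- Laplace-method bound: with `f(w,w̃) = −(w+w̃)²/8 + (w+w̃) − 4/3`, there are `C > 0` and
`L₀ > 0` such that for all `L ≥ L₀`,
`∫_{D₁} e^{2L³ f(w,w̃)} dw dw̃ ≤ C L^{−9/2} e^{−(11/12)L³}`. -/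
theorem laplace_bound_D1 :
    ∃ C L₀ : ℝ, 0 < C ∧ 0 < L₀ ∧ ∀ L : ℝ, L₀ ≤ L →
      (∫ p in D₁, Real.exp (2 * L ^ 3 *
          (-(p.1 + p.2) ^ 2 / 8 + (p.1 + p.2) - 4/3)))
        ≤ C * L ^ (-(9/2) : ℝ) * Real.exp (-(11/12) * L ^ 3) := by
  refine ⟨1, 1, one_pos, one_pos, fun L hL => ?_⟩
  set c := 3 / 2 * L ^ 3
  have hc : 0 < c := by positivity
  set K := -(11 / 12) * L ^ 3
  calc ∫ p in D₁, exp (2 * L ^ 3 * (-(p.1 + p.2) ^ 2 / 8 + (p.1 + p.2) - 4/3))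
      ≤ ∫ p in D₁, exp (K - c) * exp (c * (p.1 + p.2)) := by
        refine integral_mono_of_nonneg (.of_forall fun _ => (exp_pos _).le)
          ((integrableOn_D₁_exp_mul_add hc).const_mul _) (.of_forall fun p => ?_)
        dsimp only
        rw [← exp_add, exp_le_exp]
        exact exponent_le_tangent_at_one (zero_le_one.trans hL) (p.1 + p.2)
    _ = exp (K - c) * ∫ p in D₁, exp (c * (p.1 + p.2)) := integral_const_mul _ _
    _ ≤ exp (K - c) * (2 * exp c / c ^ 2) := by gcongr; exact setIntegral_D₁_exp_mul_add_le hc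
    _ = 2 / c ^ 2 * exp K := by rw [exp_sub]; field_simp
    _ ≤ 1 * L ^ (-(9/2) : ℝ) * exp K := by rw [one_mul]; gcongr; exact two_div_sq_le_rpow hL
end

section
/- For every m ∈ ℝ there exists a constant C > 0 (depending on m) such that for all L ≥ 1, ∫_{−∞}^0 ∫_{−∞}^1 e^{2(λ − m)L} · Ai( L²(1 − w) + m − λ )² dw dλ ≤ C e^{−2mL}. -/
open MeasureTheory Real Filter

/-!
Writing `cos φ = g · (sin ∘ φ)'` with `g = 1 / φ'` positive and decreasing, an integration by
parts bounds `|∫ₛᵀ cos φ|` by `2 g(s)`. For the Airy phase `φ(t) = t³/3 + x t` this makes the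
integral defining `Ai x` converge (Cauchy criterion) and gives `|Ai x| ≤ t₀ + 2 / (t₀² + x)`,
hence `Ai(u)² ≤ K / (1 + u²)` for `u ≥ m`; no exponential decay of `Ai` is needed.
The substitution `u = L²(1 - w) + m - λ` then bounds the inner integral by `π K / L² ≤ π K`,
and `e^{2(λ - m)L} ≤ e^{-2mL} e^{λ}` for `λ ≤ 0`, `L ≥ 1` handles the outer one.
-/

open Set Topology

theorem abs_intervalIntegral_cos_le {φ g g' : ℝ → ℝ} {a b : ℝ} (hab : a ≤ b)
    (hφ : ∀ t ∈ Icc a b, HasDerivAt φ (g t)⁻¹ t) (hg : ∀ t ∈ Icc a b, HasDerivAt g (g' t) t)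
    (hg'_int : IntervalIntegrable g' volume a b) (hg'_nonpos : ∀ t ∈ Icc a b, g' t ≤ 0)
    (hg_pos : ∀ t ∈ Icc a b, 0 < g t) :
    |∫ t in a..b, cos (φ t)| ≤ 2 * g a := by
  have hsin : ∀ t ∈ Icc a b, HasDerivAt (fun t => sin (φ t)) (cos (φ t) * (g t)⁻¹) t :=
    fun t ht => (hφ t ht).sin
  have hsin'_int : IntervalIntegrable (fun t => cos (φ t) * (g t)⁻¹) volume a b := by
    refine ContinuousOn.intervalIntegrable ?_
    rw [uIcc_of_le hab]
    exact ContinuousOn.mul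
      (continuous_cos.comp_continuousOn fun t ht => (hφ t ht).continuousAt.continuousWithinAt)
      (ContinuousOn.inv₀ (fun t ht => (hg t ht).continuousAt.continuousWithinAt)
        fun t ht => (hg_pos t ht).ne')
  have ibp := intervalIntegral.integral_mul_deriv_eq_deriv_mul
    (by rwa [uIcc_of_le hab]) (by rwa [uIcc_of_le hab]) hg'_int hsin'_int
  have hcos : ∫ t in a..b, g t * (cos (φ t) * (g t)⁻¹) = ∫ t in a..b, cos (φ t) := by
    refine intervalIntegral.integral_congr fun t ht => ?_
    rw [uIcc_of_le hab] at ht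
    field_simp [(hg_pos t ht).ne']
  have hvar : ∫ t in a..b, g' t = g b - g a :=
    intervalIntegral.integral_eq_sub_of_hasDerivAt (by rwa [uIcc_of_le hab]) hg'_int
  have hrem : |∫ t in a..b, g' t * sin (φ t)| ≤ g a - g b := by
    rw [← neg_sub, ← hvar, ← intervalIntegral.integral_neg, ← Real.norm_eq_abs]
    refine intervalIntegral.norm_integral_le_of_norm_le hab (ae_of_all _ fun t ht => ?_) hg'_int.neg
    have := hg'_nonpos t (Ioc_subset_Icc_self ht)
    rw [norm_mul, Real.norm_eq_abs, abs_of_nonpos this]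
    exact mul_le_of_le_one_right (by linarith) (abs_sin_le_one _)
  have hbdry : ∀ t ∈ Icc a b, |g t * sin (φ t)| ≤ g t := fun t ht => by
    rw [abs_mul, abs_of_pos (hg_pos t ht)]
    exact mul_le_of_le_one_right (hg_pos t ht).le (abs_sin_le_one _)
  rw [← hcos, ibp]
  have ha := hbdry a (left_mem_Icc.2 hab)
  have hb := hbdry b (right_mem_Icc.2 hab)
  calc _ ≤ |g b * sin (φ b)| + |g a * sin (φ a)| + |∫ t in a..b, g' t * sin (φ t)| :=
        (abs_sub _ _).trans (by gcongr; exact abs_sub _ _)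
    _ ≤ 2 * g a := by linarith

theorem abs_limUnder_intervalIntegral_cos_le {φ g g' : ℝ → ℝ} {t₀ : ℝ} (a : ℝ)
    (hφ_cont : Continuous φ) (hφ : ∀ t ∈ Ici t₀, HasDerivAt φ (g t)⁻¹ t)
    (hg : ∀ t ∈ Ici t₀, HasDerivAt g (g' t) t) (hg'_cont : ContinuousOn g' (Ici t₀))
    (hg'_nonpos : ∀ t ∈ Ici t₀, g' t ≤ 0) (hg_pos : ∀ t ∈ Ici t₀, 0 < g t)
    (hg_lim : Tendsto g atTop (𝓝 0)) :
    |limUnder atTop (fun T => ∫ t in a..T, cos (φ t))| ≤ |∫ t in a..t₀, cos (φ t)| + 2 * g t₀ := by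
  have tail : ∀ s T, t₀ ≤ s → s ≤ T → |∫ t in s..T, cos (φ t)| ≤ 2 * g s := by
    intro s T hs hsT
    have sub : Icc s T ⊆ Ici t₀ := fun t ht => hs.trans ht.1
    exact abs_intervalIntegral_cos_le hsT (fun t ht => hφ t (sub ht)) (fun t ht => hg t (sub ht))
      ((hg'_cont.mono sub).intervalIntegrable_of_Icc hsT) (fun t ht => hg'_nonpos t (sub ht))
      fun t ht => hg_pos t (sub ht)
  have hint : ∀ b c, IntervalIntegrable (fun t => cos (φ t)) volume b c :=
    fun b c => (continuous_cos.comp hφ_cont).intervalIntegrable b c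
  have cauchy : CauchySeq fun T => ∫ t in a..T, cos (φ t) := by
    refine Metric.cauchySeq_iff'.2 fun ε hε => ?_
    have hsmall : ∀ᶠ s in atTop, 2 * g s < ε :=
      (by simpa using hg_lim.const_mul 2 : Tendsto (fun s => 2 * g s) atTop (𝓝 0))
        (gt_mem_nhds hε)
    obtain ⟨N, hN, hNt₀⟩ := (hsmall.and (eventually_ge_atTop t₀)).exists
    refine ⟨N, fun T hT => ?_⟩
    rw [Real.dist_eq, intervalIntegral.integral_interval_sub_left (hint a T) (hint a N)]
    exact (tail N T hNt₀ hT).trans_lt hN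
  obtain ⟨l, hl⟩ := cauchySeq_tendsto_of_complete cauchy
  rw [hl.limUnder_eq]
  refine le_of_tendsto hl.abs ((eventually_ge_atTop t₀).mono fun T hT => ?_)
  rw [← intervalIntegral.integral_add_adjacent_intervals (hint a t₀) (hint t₀ T)]
  exact (abs_add_le _ _).trans (by gcongr; exact tail t₀ T le_rfl hT)

theorem abs_Ai_le {x t₀ : ℝ} (ht₀ : 0 ≤ t₀) (hx : 0 < t₀ ^ 2 + x) :
    |Ai x| ≤ t₀ + 2 / (t₀ ^ 2 + x) := by
  have hpos : ∀ t ∈ Ici t₀, 0 < t ^ 2 + x := fun t ht => by nlinarith [mem_Ici.1 ht]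
  have hphase : ∀ t, HasDerivAt (fun t => t ^ 3 / 3 + x * t) ((t ^ 2 + x)⁻¹)⁻¹ t := fun t => by
    refine (((hasDerivAt_pow 3 t).div_const 3).fun_add
      ((hasDerivAt_id t).const_mul x)).congr_deriv ?_
    simp
  have hweight : ∀ t ∈ Ici t₀,
      HasDerivAt (fun t => (t ^ 2 + x)⁻¹) (-(2 * t) / (t ^ 2 + x) ^ 2) t := fun t ht => by
    refine (((hasDerivAt_pow 2 t).add_const x).fun_inv (hpos t ht).ne').congr_deriv ?_
    simp
  have hweight_lim : Tendsto (fun t : ℝ => (t ^ 2 + x)⁻¹) atTop (𝓝 0) :=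
    (tendsto_atTop_add_const_right _ x (tendsto_pow_atTop two_ne_zero)).inv_tendsto_atTop
  have hlim := abs_limUnder_intervalIntegral_cos_le 0 (by fun_prop) (fun t _ => hphase t) hweight
    (ContinuousOn.div (by fun_prop) (by fun_prop) fun t ht => (pow_pos (hpos t ht) 2).ne')
    (fun t ht => div_nonpos_of_nonpos_of_nonneg (by linarith [mem_Ici.1 ht]) (sq_nonneg _))
    (fun t ht => inv_pos.2 (hpos t ht)) hweight_lim
  have hinit : |∫ t in (0:ℝ)..t₀, cos (t ^ 3 / 3 + x * t)| ≤ t₀ := by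
    simpa [abs_of_nonneg ht₀] using
      intervalIntegral.norm_integral_le_of_norm_le_const (a := 0) (b := t₀) (C := 1)
        fun t _ => (norm_eq_abs _).trans_le (abs_cos_le_one _)
  have hπ : |1 / π| ≤ 1 := by
    rw [abs_of_pos (by positivity), div_le_one pi_pos]
    linarith [pi_gt_three]
  unfold Ai
  rw [abs_mul, div_eq_mul_inv 2]
  exact (mul_le_of_le_one_left (abs_nonneg _) hπ).trans (hlim.trans (by linarith))

theorem abs_Ai_le_of_pos {x : ℝ} (hx : 0 < x) : |Ai x| ≤ 2 / x := by
  simpa using abs_Ai_le le_rfl (by simpa using hx)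

theorem abs_Ai_le_abs_add_three (x : ℝ) : |Ai x| ≤ |x| + 3 := by
  have hx : 1 ≤ (|x| + 1) ^ 2 + x := by nlinarith [abs_nonneg x, neg_abs_le x]
  have := abs_Ai_le (by positivity) (zero_lt_one.trans_le hx)
  have : 2 / ((|x| + 1) ^ 2 + x) ≤ 2 := div_le_self zero_le_two hx
  linarith

theorem exists_Ai_sq_le_mul_inv_one_add_sq (m : ℝ) :
    ∃ K > 0, ∀ u, m ≤ u → Ai u ^ 2 ≤ K * (1 + u ^ 2)⁻¹ := by
  set R := |m| + 1
  refine ⟨8 + (R + 3) ^ 2 * (1 + R ^ 2), by positivity, fun u hu => ?_⟩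
  rw [← div_eq_mul_inv, le_div_iff₀ (by positivity)]
  rcases le_or_gt 1 u with h1u | hu1
  · have h := abs_Ai_le_of_pos (zero_lt_one.trans_le h1u)
    rw [le_div_iff₀ (zero_lt_one.trans_le h1u)] at h
    have hAi : |Ai u| ≤ 2 := by nlinarith [abs_nonneg (Ai u)]
    have h₁ : |Ai u| ^ 2 ≤ 2 ^ 2 := pow_le_pow_left₀ (abs_nonneg _) hAi 2
    have h₂ : (|Ai u| * u) ^ 2 ≤ 2 ^ 2 := pow_le_pow_left₀ (by positivity) h 2
    rw [← sq_abs]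
    nlinarith [sq_nonneg (R + 3)]
  · have huR : |u| ≤ R := abs_le.2 ⟨by linarith [neg_abs_le m], by linarith [abs_nonneg m]⟩
    have hAi : Ai u ^ 2 ≤ (R + 3) ^ 2 := by
      rw [← sq_abs]
      exact pow_le_pow_left₀ (abs_nonneg _) ((abs_Ai_le_abs_add_three u).trans (by linarith)) 2
    have hu2 : u ^ 2 ≤ R ^ 2 := by rw [← sq_abs]; exact pow_le_pow_left₀ (abs_nonneg _) huR 2
    nlinarith [sq_nonneg (Ai u), sq_nonneg (R + 3)]

theorem integral_comp_mul_one_sub_add (h : ℝ → ℝ) (a c : ℝ) :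
    ∫ w, h (a * (1 - w) + c) = |a⁻¹| * ∫ u, h u := by
  rw [integral_sub_left_eq_self (fun v => h (a * v + c)) volume 1,
    Measure.integral_comp_mul_left (fun y => h (y + c)) a, integral_add_right_eq_self h c,
    smul_eq_mul]

theorem setIntegral_Iic_one_comp_le {f : ℝ → ℝ} {K a c : ℝ} (ha : 0 < a) (hK : 0 ≤ K)
    (hf_nonneg : ∀ u, 0 ≤ f u) (hf : ∀ u, c ≤ u → f u ≤ K * (1 + u ^ 2)⁻¹) :
    ∫ w in Iic 1, f (a * (1 - w) + c) ≤ π * K / a := by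
  set B : ℝ → ℝ := fun u => K * (1 + u ^ 2)⁻¹
  have hB : Integrable fun w => B (a * (1 - w) + c) :=
    (((integrable_inv_one_add_sq.const_mul K).comp_add_right c).comp_mul_left'
      ha.ne').comp_sub_left 1
  calc ∫ w in Iic 1, f (a * (1 - w) + c)
      ≤ ∫ w in Iic 1, B (a * (1 - w) + c) :=
        integral_mono_of_nonneg (ae_of_all _ fun w => hf_nonneg _) hB.integrableOn
          (ae_restrict_of_forall_mem measurableSet_Iic fun w hw =>
            hf _ (by nlinarith [mem_Iic.1 hw]))
    _ ≤ ∫ w, B (a * (1 - w) + c) := setIntegral_le_integral hB (ae_of_all _ fun w => by positivity)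
    _ = π * K / a := by
      rw [integral_comp_mul_one_sub_add B, integral_const_mul, integral_univ_inv_one_add_sq,
        abs_inv, abs_of_pos ha]
      ring

theorem setIntegral_Iic_one_Ai_sq_le {K m L lam : ℝ} (hL : 1 ≤ L) (hlam : lam ≤ 0) (hK : 0 ≤ K)
    (hAi : ∀ u, m ≤ u → Ai u ^ 2 ≤ K * (1 + u ^ 2)⁻¹) :
    ∫ w in Iic 1, Ai (L ^ 2 * (1 - w) + m - lam) ^ 2 ≤ π * K := by
  simp_rw [add_sub_assoc]
  refine (setIntegral_Iic_one_comp_le (by positivity) hK (fun u => sq_nonneg _)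
    fun u hu => hAi u (by linarith)).trans (div_le_self (by positivity) (by nlinarith))

/-- Hilbert–Schmidt bound for the factor `G₁`: for every `m` there is `C > 0` such that
for all `L ≥ 1`,
`∫_{−∞}^0 ∫_{−∞}^1 e^{2(λ−m)L} Ai(L²(1−w)+m−λ)² dw dλ ≤ C e^{−2mL}`. -/
theorem G1_bound (m : ℝ) :
    ∃ C : ℝ, 0 < C ∧ ∀ L : ℝ, 1 ≤ L →
      (∫ lam in Set.Iic (0:ℝ), ∫ w in Set.Iic (1:ℝ),
          Real.exp (2 * (lam - m) * L) * Ai (L ^ 2 * (1 - w) + m - lam) ^ 2)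
        ≤ C * Real.exp (-2 * m * L) := by
  obtain ⟨K, hK, hAi⟩ := exists_Ai_sq_le_mul_inv_one_add_sq m
  refine ⟨π * K, by positivity, fun L hL => ?_⟩
  have inner : ∀ lam ∈ Iic (0:ℝ), ∫ w in Iic (1:ℝ),
      exp (2 * (lam - m) * L) * Ai (L ^ 2 * (1 - w) + m - lam) ^ 2
        ≤ π * K * exp (-2 * m * L) * exp lam := fun lam hlam => by
    have hexp : exp (2 * (lam - m) * L) ≤ exp (-2 * m * L) * exp lam := by
      rw [← exp_add]
      exact exp_le_exp.2 (by nlinarith [mem_Iic.1 hlam])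
    rw [integral_const_mul]
    calc _ ≤ exp (-2 * m * L) * exp lam * (π * K) :=
          mul_le_mul hexp (setIntegral_Iic_one_Ai_sq_le hL hlam hK.le hAi)
            (integral_nonneg fun w => sq_nonneg _) (by positivity)
      _ = π * K * exp (-2 * m * L) * exp lam := by ring
  calc _ ≤ ∫ lam in Iic (0:ℝ), π * K * exp (-2 * m * L) * exp lam :=
        integral_mono_of_nonneg
          (ae_of_all _ fun lam => integral_nonneg fun w => by positivity)
          ((integrableOn_exp_Iic 0).const_mul _)
          (ae_restrict_of_forall_mem measurableSet_Iic inner)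
    _ = π * K * exp (-2 * m * L) := by rw [integral_const_mul, integral_exp_Iic, exp_zero, mul_one]
end
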